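/- arXiv:2403.03148 — 12 statements merged into one kernel-verified Lean document; each statement's English description precedes it below -/
import Mathlib

section
/- Let X be a topological space and define, for subsets y, z of X, y D z iff interior(y) ∪ interior(z) ≠ X. Then: (D1) y D z implies y ≠ X and z ≠ X; (D2) y D (z₁ ∩ z₂) iff y D z₁ or y D z₂; (D3) (y₁ ∩ y₂) D z iff y₁ D z or y₂ D z; (D4) if y ≠ X then y D y; (D5) if y D z then z D y; (D8) if y ∪ z ≠ X then y D z. Moreover, if X is a preconnected space, then (D7) holds: if y ≠ ∅ and y ≠ X, then y D (X \ y) or (X \ y) D y. -/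
theorem stmt_4 {X : Type*} [TopologicalSpace X] :
    (∀ y z : Set X, interior y ∪ interior z ≠ Set.univ → y ≠ Set.univ ∧ z ≠ Set.univ) ∧
    (∀ y z₁ z₂ : Set X,
      interior y ∪ interior (z₁ ∩ z₂) ≠ Set.univ ↔
        (interior y ∪ interior z₁ ≠ Set.univ ∨ interior y ∪ interior z₂ ≠ Set.univ)) ∧
    (∀ y₁ y₂ z : Set X,
      interior (y₁ ∩ y₂) ∪ interior z ≠ Set.univ ↔
        (interior y₁ ∪ interior z ≠ Set.univ ∨ interior y₂ ∪ interior z ≠ Set.univ)) ∧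
    (∀ y : Set X, y ≠ Set.univ → interior y ∪ interior y ≠ Set.univ) ∧
    (∀ y z : Set X, interior y ∪ interior z ≠ Set.univ → interior z ∪ interior y ≠ Set.univ) ∧
    (∀ y z : Set X, y ∪ z ≠ Set.univ → interior y ∪ interior z ≠ Set.univ) ∧
    (PreconnectedSpace X → ∀ y : Set X, y ≠ ∅ → y ≠ Set.univ →
      (interior y ∪ interior yᶜ ≠ Set.univ ∨ interior yᶜ ∪ interior y ≠ Set.univ)) := by
  refine ⟨?_, ?_, ?_, ?_, ?_, ?_, ?_⟩
  · intro y z h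
    constructor
    · rintro rfl; apply h; simp
    · rintro rfl; apply h; simp
  · intro y z₁ z₂
    rw [interior_inter, Set.union_inter_distrib_left]
    constructor
    · intro h
      by_contra hc
      push_neg at hc
      exact h (by rw [hc.1, hc.2, Set.univ_inter])
    · rintro (h | h) hu
      · exact h (Set.eq_univ_of_univ_subset (hu ▸ Set.inter_subset_left))
      · exact h (Set.eq_univ_of_univ_subset (hu ▸ Set.inter_subset_right))
  · intro y₁ y₂ z
    rw [interior_inter, Set.union_comm _ (interior z), Set.union_inter_distrib_left,
      Set.union_comm (interior z) _, Set.union_comm (interior z) _]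
    constructor
    · intro h
      by_contra hc
      push_neg at hc
      exact h (by rw [hc.1, hc.2, Set.univ_inter])
    · rintro (h | h) hu
      · exact h (Set.eq_univ_of_univ_subset (hu ▸ Set.inter_subset_left))
      · exact h (Set.eq_univ_of_univ_subset (hu ▸ Set.inter_subset_right))
  · intro y hy h
    apply hy
    rw [Set.union_self] at h
    exact Set.eq_univ_of_univ_subset (h ▸ interior_subset)
  · intro y z h
    rwa [Set.union_comm]
  · intro y z h hu
    apply h
    apply Set.eq_univ_of_univ_subset
    rw [← hu]
    exact Set.union_subset_union interior_subset interior_subset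
  · intro hX y hne hnu
    left
    intro h
    rcases (interior y).eq_empty_or_nonempty with he | hne'
    · rw [he, Set.empty_union] at h
      have hc : yᶜ = Set.univ := Set.eq_univ_of_univ_subset (h ▸ interior_subset)
      exact hne (Set.compl_univ_iff.mp hc)
    · have hdisj : Disjoint (interior y) (interior yᶜ) :=
        (disjoint_compl_right (a := y)).mono interior_subset interior_subset
      have := isPreconnected_univ.subset_left_of_subset_union isOpen_interior
        isOpen_interior hdisj h.ge (by simpa using hne')
      exact hnu (Set.eq_univ_of_univ_subset (this.trans interior_subset))
end

section
/- Let A be a Boolean algebra. (1) If ≺ is a subordination relation on A, then the relation D_≺ defined by a D_≺ b iff ¬(aᶜ ≺ b) is a dual precontact relation on A. (2) If D is a dual precontact relation on A, then the relation ≺_D defined by a ≺_D b iff ¬(aᶜ D b) is a subordination relation on A. (3) These assignments are mutually inverse: ≺ coincides with ≺_{D_≺}, and D coincides with D_{≺_D}. -/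
/-- A subordination relation on a Boolean algebra. -/
def IsSubordination {A : Type*} [BooleanAlgebra A] (r : A → A → Prop) : Prop :=
  (r ⊥ ⊥ ∧ r ⊤ ⊤) ∧
  (∀ a b c : A, r a b → r a c → r a (b ⊓ c)) ∧
  (∀ a b c : A, r a c → r b c → r (a ⊔ b) c) ∧
  (∀ a b c d : A, a ≤ b → r b c → c ≤ d → r a d)

/-- A dual precontact relation on a Boolean algebra. -/
def IsDualPrecontact {A : Type*} [BooleanAlgebra A] (D : A → A → Prop) : Prop :=
  (∀ a b : A, D a b → a ≠ ⊤ ∧ b ≠ ⊤) ∧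
  (∀ a b c : A, D a (b ⊓ c) ↔ (D a b ∨ D a c)) ∧
  (∀ a b c : A, D (a ⊓ b) c ↔ (D a c ∨ D b c))

theorem stmt_5 {A : Type*} [BooleanAlgebra A] :
    (∀ r : A → A → Prop, IsSubordination r →
      IsDualPrecontact (fun a b => ¬ r aᶜ b)) ∧
    (∀ D : A → A → Prop, IsDualPrecontact D →
      IsSubordination (fun a b => ¬ D aᶜ b)) ∧
    (∀ r : A → A → Prop, IsSubordination r →
      ∀ a b : A, r a b ↔ ¬ ¬ r aᶜᶜ b) ∧
    (∀ D : A → A → Prop, IsDualPrecontact D →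
      ∀ a b : A, D a b ↔ ¬ ¬ D aᶜᶜ b) := by

  refine ⟨?_, ?_, ?_, ?_⟩
  · rintro r ⟨⟨hbb, htt⟩, h2, h3, h4⟩
    refine ⟨?_, ?_, ?_⟩
    · intro a b h
      constructor
      · rintro rfl
        exact h (h4 ⊤ᶜ ⊥ ⊥ b (le_of_eq compl_top) hbb bot_le)
      · rintro rfl
        exact h (h4 aᶜ ⊤ ⊤ ⊤ le_top htt le_rfl)
    · intro a b c
      simp only []
      rw [← not_and_or, not_iff_not]
      constructor
      · intro h
        exact ⟨h4 aᶜ aᶜ (b ⊓ c) b le_rfl h inf_le_left,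
               h4 aᶜ aᶜ (b ⊓ c) c le_rfl h inf_le_right⟩
      · rintro ⟨h1, h2'⟩
        exact h2 aᶜ b c h1 h2'
    · intro a b c
      simp only []
      rw [← not_and_or, not_iff_not]
      have hc : (a ⊓ b)ᶜ = aᶜ ⊔ bᶜ := compl_inf
      rw [hc]
      constructor
      · intro h
        exact ⟨h4 aᶜ (aᶜ ⊔ bᶜ) c c le_sup_left h le_rfl,
               h4 bᶜ (aᶜ ⊔ bᶜ) c c le_sup_right h le_rfl⟩
      · rintro ⟨h1, h2'⟩
        exact h3 aᶜ bᶜ c h1 h2'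
  · rintro D ⟨d1, d2, d3⟩
    refine ⟨⟨?_, ?_⟩, ?_, ?_, ?_⟩
    · intro h; exact (d1 _ _ h).1 (by simp)
    · intro h; exact (d1 _ _ h).2 rfl
    · intro a b c hb hc h
      rcases (d2 aᶜ b c).mp h with h' | h'
      · exact hb h'
      · exact hc h'
    · intro a b c ha hb h
      rw [show (a ⊔ b)ᶜ = aᶜ ⊓ bᶜ from compl_sup] at h
      rcases (d3 aᶜ bᶜ c).mp h with h' | h'
      · exact ha h'
      · exact hb h'
    · intro a b c d hab hbc hcd h
      apply hbc
      have h1 : D bᶜ d := by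
        have := (d3 aᶜ bᶜ d).mpr (Or.inl h)
        rwa [inf_eq_right.mpr (compl_le_compl hab)] at this
      have := (d2 bᶜ c d).mpr (Or.inr h1)
      rwa [inf_eq_left.mpr hcd] at this
  · intro r _ a b
    rw [compl_compl, not_not]
  · intro D _ a b
    rw [compl_compl, not_not]
end

section
/- Let L be a complete lattice and A ⊆ L a subset that is closed under the binary join of L, and assume A is dense and compact in L. If F₁ and F₂ are nonempty down-directed subsets of A, then the set {c₁ ⊔ c₂ | c₁ ∈ F₁, c₂ ∈ F₂} is a nonempty down-directed subset of A and sInf F₁ ⊔ sInf F₂ = sInf {c₁ ⊔ c₂ | c₁ ∈ F₁, c₂ ∈ F₂}. In particular, the join of two closed elements (relative to A) is closed. -/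
/-- An element is closed relative to `A` if it is the infimum of a nonempty
down-directed subset of `A`. -/
def IsClosedElt {L : Type*} [CompleteLattice L] (A : Set L) (k : L) : Prop :=
  ∃ F : Set L, F ⊆ A ∧ F.Nonempty ∧ DirectedOn (· ≥ ·) F ∧ k = sInf F

/-- An element is open relative to `A` if it is the supremum of a nonempty
up-directed subset of `A`. -/
def IsOpenElt {L : Type*} [CompleteLattice L] (A : Set L) (o : L) : Prop :=
  ∃ I : Set L, I ⊆ A ∧ I.Nonempty ∧ DirectedOn (· ≤ ·) I ∧ o = sSup I

/-- `A` is compact in `L`. -/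
def CompactIn {L : Type*} [CompleteLattice L] (A : Set L) : Prop :=
  ∀ F I : Set L, F ⊆ A → F.Nonempty → DirectedOn (· ≥ ·) F →
    I ⊆ A → I.Nonempty → DirectedOn (· ≤ ·) I →
    sInf F ≤ sSup I → ∃ a ∈ F, ∃ b ∈ I, a ≤ b

/-- `A` is dense in `L`. -/
def DenseIn {L : Type*} [CompleteLattice L] (A : Set L) : Prop :=
  ∀ u : L, (∃ S : Set L, (∀ k ∈ S, IsClosedElt A k) ∧ u = sSup S) ∧
    (∃ S : Set L, (∀ o ∈ S, IsOpenElt A o) ∧ u = sInf S)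

lemma aux_main {L : Type*} [CompleteLattice L] (A : Set L)
    (hjoin : ∀ a ∈ A, ∀ b ∈ A, a ⊔ b ∈ A)
    (hdense : DenseIn A) (hcompact : CompactIn A)
    (F₁ F₂ : Set L) (hF₁ : F₁ ⊆ A) (hF₂ : F₂ ⊆ A)
    (hne₁ : F₁.Nonempty) (hne₂ : F₂.Nonempty)
    (hdir₁ : DirectedOn (· ≥ ·) F₁) (hdir₂ : DirectedOn (· ≥ ·) F₂) :
    {x | ∃ c₁ ∈ F₁, ∃ c₂ ∈ F₂, x = c₁ ⊔ c₂} ⊆ A ∧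
      Set.Nonempty {x | ∃ c₁ ∈ F₁, ∃ c₂ ∈ F₂, x = c₁ ⊔ c₂} ∧
      DirectedOn (· ≥ ·) {x | ∃ c₁ ∈ F₁, ∃ c₂ ∈ F₂, x = c₁ ⊔ c₂} ∧
      sInf F₁ ⊔ sInf F₂ = sInf {x | ∃ c₁ ∈ F₁, ∃ c₂ ∈ F₂, x = c₁ ⊔ c₂} := by
  set G : Set L := {x | ∃ c₁ ∈ F₁, ∃ c₂ ∈ F₂, x = c₁ ⊔ c₂} with hG
  have hGA : G ⊆ A := by
    rintro x ⟨c₁, hc₁, c₂, hc₂, rfl⟩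
    exact hjoin _ (hF₁ hc₁) _ (hF₂ hc₂)
  obtain ⟨a₁, ha₁⟩ := hne₁
  obtain ⟨a₂, ha₂⟩ := hne₂
  have hGne : G.Nonempty := ⟨a₁ ⊔ a₂, a₁, ha₁, a₂, ha₂, rfl⟩
  have hGdir : DirectedOn (· ≥ ·) G := by
    rintro x ⟨c₁, hc₁, c₂, hc₂, rfl⟩ y ⟨d₁, hd₁, d₂, hd₂, rfl⟩
    obtain ⟨e₁, he₁, he₁c, he₁d⟩ := hdir₁ c₁ hc₁ d₁ hd₁
    obtain ⟨e₂, he₂, he₂c, he₂d⟩ := hdir₂ c₂ hc₂ d₂ hd₂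
    exact ⟨e₁ ⊔ e₂, ⟨e₁, he₁, e₂, he₂, rfl⟩,
      sup_le_sup he₁c he₂c, sup_le_sup he₁d he₂d⟩
  refine ⟨hGA, hGne, hGdir, le_antisymm ?_ ?_⟩
  · apply le_sInf
    rintro x ⟨c₁, hc₁, c₂, hc₂, rfl⟩
    exact sup_le_sup (sInf_le hc₁) (sInf_le hc₂)
  · -- sInf G ≤ sInf F₁ ⊔ sInf F₂, via density and compactness
    obtain ⟨_, S, hSopen, hSeq⟩ := hdense (sInf F₁ ⊔ sInf F₂)
    rw [hSeq]
    apply le_sInf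
    intro o ho
    obtain ⟨I, hIA, hIne, hIdir, rfl⟩ := hSopen o ho
    have hu : sInf F₁ ⊔ sInf F₂ ≤ sSup I := hSeq ▸ sInf_le ho
    obtain ⟨b₁, hb₁, c₁, hc₁, hbc₁⟩ :=
      hcompact F₁ I hF₁ ⟨a₁, ha₁⟩ hdir₁ hIA hIne hIdir (le_sup_left.trans hu)
    obtain ⟨b₂, hb₂, c₂, hc₂, hbc₂⟩ :=
      hcompact F₂ I hF₂ ⟨a₂, ha₂⟩ hdir₂ hIA hIne hIdir (le_sup_right.trans hu)
    obtain ⟨c, hc, hc₁c, hc₂c⟩ := hIdir c₁ hc₁ c₂ hc₂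
    calc sInf G ≤ b₁ ⊔ b₂ := sInf_le ⟨b₁, hb₁, b₂, hb₂, rfl⟩
      _ ≤ c := sup_le (hbc₁.trans hc₁c) (hbc₂.trans hc₂c)
      _ ≤ sSup I := le_sSup hc

theorem stmt_8 {L : Type*} [CompleteLattice L] (A : Set L)
    (hjoin : ∀ a ∈ A, ∀ b ∈ A, a ⊔ b ∈ A)
    (hdense : DenseIn A) (hcompact : CompactIn A)
    (F₁ F₂ : Set L) (hF₁ : F₁ ⊆ A) (hF₂ : F₂ ⊆ A)
    (hne₁ : F₁.Nonempty) (hne₂ : F₂.Nonempty)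
    (hdir₁ : DirectedOn (· ≥ ·) F₁) (hdir₂ : DirectedOn (· ≥ ·) F₂) :
    ({x | ∃ c₁ ∈ F₁, ∃ c₂ ∈ F₂, x = c₁ ⊔ c₂} ⊆ A ∧
      Set.Nonempty {x | ∃ c₁ ∈ F₁, ∃ c₂ ∈ F₂, x = c₁ ⊔ c₂} ∧
      DirectedOn (· ≥ ·) {x | ∃ c₁ ∈ F₁, ∃ c₂ ∈ F₂, x = c₁ ⊔ c₂} ∧
      sInf F₁ ⊔ sInf F₂ = sInf {x | ∃ c₁ ∈ F₁, ∃ c₂ ∈ F₂, x = c₁ ⊔ c₂}) ∧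
    (∀ k₁ k₂ : L, IsClosedElt A k₁ → IsClosedElt A k₂ → IsClosedElt A (k₁ ⊔ k₂)) := by
  refine ⟨aux_main A hjoin hdense hcompact F₁ F₂ hF₁ hF₂ hne₁ hne₂ hdir₁ hdir₂, ?_⟩
  rintro k₁ k₂ ⟨G₁, hG₁A, hG₁ne, hG₁dir, rfl⟩ ⟨G₂, hG₂A, hG₂ne, hG₂dir, rfl⟩
  obtain ⟨hA, hne, hdir, heq⟩ :=
    aux_main A hjoin hdense hcompact G₁ G₂ hG₁A hG₂A hG₁ne hG₂ne hG₁dir hG₂dir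
  exact ⟨_, hA, hne, hdir, heq⟩
end

section
/- Let L be a complete lattice and A ⊆ L a subset that is closed under the binary meet of L and contains the top element of L. Then for every set K ⊆ L of elements each of which is closed relative to A, the infimum sInf K is closed relative to A. -/
theorem stmt_9 {L : Type*} [CompleteLattice L] (A : Set L)
    (htop : ⊤ ∈ A) (hmeet : ∀ a ∈ A, ∀ b ∈ A, a ⊓ b ∈ A)
    (K : Set L) (hK : ∀ k ∈ K, IsClosedElt A k) :
    IsClosedElt A (sInf K) := by
  classical
  -- choose for each k a witnessing family
  choose F hFA hFne hFdir hFinf using hK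
  -- S : union of all witnessing families
  set S : Set L := ⋃ (k : L) (h : k ∈ K), F k h with hS
  have hSA : S ⊆ A := by
    intro x hx
    simp only [hS, Set.mem_iUnion] at hx
    obtain ⟨k, hk, hxk⟩ := hx
    exact hFA k hk hxk
  -- G : finite meets of elements of S
  refine ⟨{x | ∃ s : Finset L, ↑s ⊆ S ∧ x = s.inf id}, ?_, ?_, ?_, ?_⟩
  · rintro x ⟨s, hsS, rfl⟩
    induction s using Finset.induction with
    | empty => simpa using htop
    | @insert a s ha ih =>
      rw [Finset.inf_insert]
      have haA : a ∈ A := hSA (hsS (by simp))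
      have hsS' : ↑s ⊆ S := fun y hy => hsS (by simp [hy])
      exact hmeet a haA _ (ih hsS')
  · exact ⟨⊤, ∅, by simp⟩
  · rintro x ⟨s, hsS, rfl⟩ y ⟨t, htS, rfl⟩
    refine ⟨(s ∪ t).inf id, ⟨s ∪ t, ?_, rfl⟩, ?_, ?_⟩
    · intro z hz
      rcases Finset.mem_union.mp (by simpa using hz) with h | h
      · exact hsS h
      · exact htS h
    · exact Finset.inf_mono Finset.subset_union_left
    · exact Finset.inf_mono Finset.subset_union_right
  · -- sInf K = sInf of finite meets of S
    have h1 : sInf K = sInf S := by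
      apply le_antisymm
      · apply le_sInf
        intro x hx
        simp only [hS, Set.mem_iUnion] at hx
        obtain ⟨k, hk, hxk⟩ := hx
        calc sInf K ≤ k := sInf_le hk
          _ = sInf (F k hk) := hFinf k hk
          _ ≤ x := sInf_le hxk
      · apply le_sInf
        intro k hk
        rw [hFinf k hk]
        exact sInf_le_sInf fun x hx => Set.mem_iUnion.mpr ⟨k, Set.mem_iUnion.mpr ⟨hk, hx⟩⟩
    rw [h1]
    apply le_antisymm
    · apply le_sInf
      rintro x ⟨s, hsS, rfl⟩
      exact Finset.le_inf fun b hb => sInf_le (hsS hb)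
    · exact sInf_le_sInf fun x hx => ⟨{x}, by simpa using hx, by simp⟩
end

section
/- Let L be a complete lattice, A ⊆ L a subset compact in L, and ≺ a binary relation on A satisfying (SF), (DD), (SB), (UD), (SI) and (WO). Define ◇a := sInf {c ∈ A | a ≺ c} and ■b := sSup {c ∈ A | c ≺ b} (computed in L). Then for all a, b ∈ A the following are equivalent: ◇a ≤ b; a ≺ b; a ≤ ■b. -/
theorem stmt_11 {L : Type*} [CompleteLattice L] (A : Set L)
    (hcompact : CompactIn A) (r : L → L → Prop)
    (hSF : ∀ a ∈ A, ∃ b ∈ A, r a b)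
    (hDD : ∀ a ∈ A, ∀ x₁ ∈ A, ∀ x₂ ∈ A, r a x₁ → r a x₂ →
      ∃ x ∈ A, r a x ∧ x ≤ x₁ ∧ x ≤ x₂)
    (hSB : ∀ a ∈ A, ∃ b ∈ A, r b a)
    (hUD : ∀ a₁ ∈ A, ∀ a₂ ∈ A, ∀ x ∈ A, r a₁ x → r a₂ x →
      ∃ a ∈ A, r a x ∧ a₁ ≤ a ∧ a₂ ≤ a)
    (hSI : ∀ a ∈ A, ∀ b ∈ A, ∀ x ∈ A, a ≤ b → r b x → r a x)
    (hWO : ∀ b ∈ A, ∀ x ∈ A, ∀ y ∈ A, r b x → x ≤ y → r b y) :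
    ∀ a ∈ A, ∀ b ∈ A,
      (sInf {c | c ∈ A ∧ r a c} ≤ b ↔ r a b) ∧
      (r a b ↔ a ≤ sSup {c | c ∈ A ∧ r c b}) := by
  intro a ha b hb
  constructor
  · constructor
    · intro h
      obtain ⟨c, ⟨hcA, hrac⟩, d, hd, hcd⟩ :=
        hcompact {c | c ∈ A ∧ r a c} {b}
          (fun x hx => hx.1) ((hSF a ha).imp fun x hx => ⟨hx.1, hx.2⟩)
          (fun x hx y hy => by
            obtain ⟨z, hz, hraz, hz1, hz2⟩ := hDD a ha x hx.1 y hy.1 hx.2 hy.2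
            exact ⟨z, ⟨hz, hraz⟩, hz1, hz2⟩)
          (by simpa using hb) ⟨b, rfl⟩ (by simp [DirectedOn])
          (by simpa using h)
      rw [Set.mem_singleton_iff] at hd
      exact hWO a ha c hcA b hb hrac (hd ▸ hcd)
    · intro h
      exact sInf_le ⟨hb, h⟩
  · constructor
    · intro h
      exact le_sSup ⟨ha, h⟩
    · intro h
      obtain ⟨c, hc, d, ⟨hdA, hrdb⟩, hcd⟩ :=
        hcompact {a} {c | c ∈ A ∧ r c b}
          (by simpa using ha) ⟨a, rfl⟩ (by simp [DirectedOn])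
          (fun x hx => hx.1) ((hSB b hb).imp fun x hx => ⟨hx.1, hx.2⟩)
          (fun x hx y hy => by
            obtain ⟨z, hz, hrzb, hz1, hz2⟩ := hUD x hx.1 y hy.1 b hb hx.2 hy.2
            exact ⟨z, ⟨hz, hrzb⟩, hz1, hz2⟩)
          (by simpa using h)
      rw [Set.mem_singleton_iff] at hc
      exact hSI a ha d hdA b hb (hc ▸ hcd) hrdb
end

section
/- Let L be a complete lattice, A ⊆ L a subset compact in L, and C a binary relation on A; write a C̸ b for ¬(a C b). (1) If C satisfies (SF)▷, (DD)▷ and (WO)▷, then for all a, b ∈ A: b ≤ sSup {c ∈ A | a C̸ c} if and only if a C̸ b. (2) If C satisfies (SB)▷, (UD)▷ and (SI)▷, then for all a, b ∈ A: a ≤ sSup {c ∈ A | c C̸ b} if and only if a C̸ b. -/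
theorem stmt_12 {L : Type*} [CompleteLattice L] (A : Set L)
    (hcompact : CompactIn A) (C : L → L → Prop) :
    (((∀ a ∈ A, ∃ b ∈ A, ¬ C a b) ∧
      (∀ a ∈ A, ∀ x₁ ∈ A, ∀ x₂ ∈ A, ¬ C a x₁ → ¬ C a x₂ →
        ∃ x ∈ A, ¬ C a x ∧ x₁ ≤ x ∧ x₂ ≤ x) ∧
      (∀ a ∈ A, ∀ b ∈ A, ∀ c ∈ A, ¬ C a c → b ≤ c → ¬ C a b)) →
      ∀ a ∈ A, ∀ b ∈ A, (b ≤ sSup {c | c ∈ A ∧ ¬ C a c} ↔ ¬ C a b)) ∧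
    (((∀ a ∈ A, ∃ b ∈ A, ¬ C b a) ∧
      (∀ a ∈ A, ∀ b ∈ A, ∀ x ∈ A, ¬ C a x → ¬ C b x →
        ∃ d ∈ A, ¬ C d x ∧ a ≤ d ∧ b ≤ d) ∧
      (∀ a ∈ A, ∀ b ∈ A, ∀ c ∈ A, a ≤ b → ¬ C b c → ¬ C a c)) →
      ∀ a ∈ A, ∀ b ∈ A, (a ≤ sSup {c | c ∈ A ∧ ¬ C c b} ↔ ¬ C a b)) := by
  constructor
  · rintro ⟨hSF, hDD, hWO⟩ a ha b hb
    constructor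
    · intro hle
      set S : Set L := {c | c ∈ A ∧ ¬ C a c}
      obtain ⟨c, hcA, hc⟩ := hSF a ha
      obtain ⟨x, hxF, y, hyI, hxy⟩ := hcompact {b} S
        (by simpa using hb) ⟨b, rfl⟩ (by intro x hx y hy; exact ⟨x, hx, le_refl x, hy ▸ hx ▸ le_refl x⟩)
        (fun z hz => hz.1) ⟨c, hcA, hc⟩
        (fun x₁ hx₁ x₂ hx₂ => by
          obtain ⟨x, hxA, hx, h1, h2⟩ := hDD a ha x₁ hx₁.1 x₂ hx₂.1 hx₁.2 hx₂.2
          exact ⟨x, ⟨hxA, hx⟩, h1, h2⟩)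
        (by simpa using hle)
      rcases hxF with rfl
      exact hWO a ha x hb y hyI.1 hyI.2 hxy
    · intro h
      exact le_sSup ⟨hb, h⟩
  · rintro ⟨hSB, hUD, hSI⟩ a ha b hb
    constructor
    · intro hle
      set S : Set L := {c | c ∈ A ∧ ¬ C c b}
      obtain ⟨c, hcA, hc⟩ := hSB b hb
      obtain ⟨x, hxF, y, hyI, hxy⟩ := hcompact {a} S
        (by simpa using ha) ⟨a, rfl⟩ (by intro x hx y hy; exact ⟨x, hx, le_refl x, hy ▸ hx ▸ le_refl x⟩)
        (fun z hz => hz.1) ⟨c, hcA, hc⟩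
        (fun x₁ hx₁ x₂ hx₂ => by
          obtain ⟨d, hdA, hd, h1, h2⟩ := hUD x₁ hx₁.1 x₂ hx₂.1 b hb hx₁.2 hx₂.2
          exact ⟨d, ⟨hdA, hd⟩, h1, h2⟩)
        (by simpa using hle)
      rcases hxF with rfl
      exact hSI x ha y hyI.1 b hb hxy hyI.2
    · intro h
      exact le_sSup ⟨ha, h⟩
end

section
/- Let L be a complete lattice and A ⊆ L a subset closed under the binary join of L which is dense and compact in L, and let ≺ be a binary relation on A satisfying (SF), (DD), (SB), (UD) and (WO). Then ≺ satisfies (OR) (i.e., a ≺ x and b ≺ x imply (a ⊔ b) ≺ x) if and only if for all a, b ∈ A: sInf {c ∈ A | (a ⊔ b) ≺ c} ≤ sInf {c ∈ A | a ≺ c} ⊔ sInf {c ∈ A | b ≺ c}. -/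
theorem stmt_13 {L : Type*} [CompleteLattice L] (A : Set L)
    (hjoin : ∀ a ∈ A, ∀ b ∈ A, a ⊔ b ∈ A)
    (hdense : DenseIn A) (hcompact : CompactIn A)
    (r : L → L → Prop)
    (hSF : ∀ a ∈ A, ∃ b ∈ A, r a b)
    (hDD : ∀ a ∈ A, ∀ x₁ ∈ A, ∀ x₂ ∈ A, r a x₁ → r a x₂ →
      ∃ x ∈ A, r a x ∧ x ≤ x₁ ∧ x ≤ x₂)
    (hSB : ∀ a ∈ A, ∃ b ∈ A, r b a)
    (hUD : ∀ a₁ ∈ A, ∀ a₂ ∈ A, ∀ x ∈ A, r a₁ x → r a₂ x →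
      ∃ a ∈ A, r a x ∧ a₁ ≤ a ∧ a₂ ≤ a)
    (hWO : ∀ b ∈ A, ∀ x ∈ A, ∀ y ∈ A, r b x → x ≤ y → r b y) :
    (∀ a ∈ A, ∀ b ∈ A, ∀ x ∈ A, r a x → r b x → r (a ⊔ b) x) ↔
      (∀ a ∈ A, ∀ b ∈ A,
        sInf {c | c ∈ A ∧ r (a ⊔ b) c} ≤
          sInf {c | c ∈ A ∧ r a c} ⊔ sInf {c | c ∈ A ∧ r b c}) := by

  -- N(a) := {c | c ∈ A ∧ r a c} is a nonempty down-directed subset of A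
  have hNsub : ∀ a : L, {c | c ∈ A ∧ r a c} ⊆ A := fun a c hc => hc.1
  have hNne : ∀ a ∈ A, ({c | c ∈ A ∧ r a c} : Set L).Nonempty := by
    intro a ha
    obtain ⟨b, hb, hrb⟩ := hSF a ha
    exact ⟨b, hb, hrb⟩
  have hNdir : ∀ a ∈ A, DirectedOn (· ≥ ·) {c | c ∈ A ∧ r a c} := by
    intro a ha x hx y hy
    obtain ⟨z, hz, hrz, hz1, hz2⟩ := hDD a ha x hx.1 y hy.1 hx.2 hy.2
    exact ⟨z, ⟨hz, hrz⟩, hz1, hz2⟩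
  constructor
  · intro hOR a ha b hb
    have hab : a ⊔ b ∈ A := hjoin a ha b hb
    set v := sInf {c | c ∈ A ∧ r a c} ⊔ sInf {c | c ∈ A ∧ r b c} with hv
    obtain ⟨-, S, hSopen, hvS⟩ := hdense v
    rw [hvS]
    apply le_sInf
    intro o ho
    obtain ⟨I, hIA, hIne, hIdir, hoI⟩ := hSopen o ho
    have hvo : v ≤ o := hvS ▸ sInf_le ho
    have hao : sInf {c | c ∈ A ∧ r a c} ≤ sSup I :=
      hoI ▸ le_trans (le_trans le_sup_left hvo) le_rfl
    have hbo : sInf {c | c ∈ A ∧ r b c} ≤ sSup I :=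
      hoI ▸ le_trans (le_trans le_sup_right hvo) le_rfl
    obtain ⟨c, hc, i, hi, hci⟩ := hcompact _ I (hNsub a) (hNne a ha) (hNdir a ha)
      hIA hIne hIdir hao
    obtain ⟨d, hd, j, hj, hdj⟩ := hcompact _ I (hNsub b) (hNne b hb) (hNdir b hb)
      hIA hIne hIdir hbo
    obtain ⟨e, he, hie, hje⟩ := hIdir i hi j hj
    have hrae : r a e := hWO a ha c hc.1 e (hIA he) hc.2 (le_trans hci hie)
    have hrbe : r b e := hWO b hb d hd.1 e (hIA he) hd.2 (le_trans hdj hje)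
    have : r (a ⊔ b) e := hOR a ha b hb e (hIA he) hrae hrbe
    calc sInf {c | c ∈ A ∧ r (a ⊔ b) c} ≤ e := sInf_le ⟨hIA he, this⟩
      _ ≤ sSup I := le_sSup he
      _ = o := hoI.symm
  · intro hle a ha b hb x hx hax hbx
    have hab : a ⊔ b ∈ A := hjoin a ha b hb
    have h1 : sInf {c | c ∈ A ∧ r (a ⊔ b) c} ≤ x := by
      refine le_trans (hle a ha b hb) ?_
      exact sup_le (sInf_le ⟨hx, hax⟩) (sInf_le ⟨hx, hbx⟩)
    obtain ⟨c, hc, y, hy, hcy⟩ := hcompact _ {x} (hNsub (a ⊔ b)) (hNne _ hab)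
      (hNdir _ hab) (by simpa using hx) ⟨x, rfl⟩
      (by intro u hu v hv; exact ⟨x, rfl, by simp_all, by simp_all⟩)
      (by simpa using h1)
    have hyx : y = x := hy
    exact hWO (a ⊔ b) hab c hc.1 x hx hc.2 (hyx ▸ hcy)
end

section
/- Let L be a complete lattice, A ⊆ L a subset compact in L, and ≺ a binary relation on A satisfying (SF), (DD), (SI) and (WO). Define ◇a := sInf {c ∈ A | a ≺ c} and ◇◇a := sInf {◇b | b ∈ A, ◇a ≤ b}. Then: (1) the transitivity condition (T) [for all a, b, c ∈ A, a ≺ b and b ≺ c imply a ≺ c] holds if and only if ◇a ≤ ◇◇a for every a ∈ A; (2) the density condition (D) [for all a, c ∈ A, a ≺ c implies that a ≺ b and b ≺ c for some b ∈ A] holds if and only if ◇◇a ≤ ◇a for every a ∈ A. -/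
/-- The slanted diamond associated with a relation `r` on `A`. -/
def diam {L : Type*} [CompleteLattice L] (A : Set L) (r : L → L → Prop) (a : L) : L :=
  sInf {c | c ∈ A ∧ r a c}

/-- The iterated diamond `◇◇a = sInf {◇b | b ∈ A, ◇a ≤ b}`. -/
def diam2 {L : Type*} [CompleteLattice L] (A : Set L) (r : L → L → Prop) (a : L) : L :=
  sInf {x | ∃ b ∈ A, diam A r a ≤ b ∧ x = diam A r b}

theorem stmt_14 {L : Type*} [CompleteLattice L] (A : Set L)
    (hcompact : CompactIn A) (r : L → L → Prop)
    (hSF : ∀ a ∈ A, ∃ b ∈ A, r a b)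
    (hDD : ∀ a ∈ A, ∀ x₁ ∈ A, ∀ x₂ ∈ A, r a x₁ → r a x₂ →
      ∃ x ∈ A, r a x ∧ x ≤ x₁ ∧ x ≤ x₂)
    (hSI : ∀ a ∈ A, ∀ b ∈ A, ∀ x ∈ A, a ≤ b → r b x → r a x)
    (hWO : ∀ b ∈ A, ∀ x ∈ A, ∀ y ∈ A, r b x → x ≤ y → r b y) :
    ((∀ a ∈ A, ∀ b ∈ A, ∀ c ∈ A, r a b → r b c → r a c) ↔
      ∀ a ∈ A, diam A r a ≤ diam2 A r a) ∧
    ((∀ a ∈ A, ∀ c ∈ A, r a c → ∃ b ∈ A, r a b ∧ r b c) ↔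
      ∀ a ∈ A, diam2 A r a ≤ diam A r a) := by
  have hdir : ∀ a ∈ A, DirectedOn (· ≥ ·) {c | c ∈ A ∧ r a c} := by
    intro a ha x hx y hy
    obtain ⟨z, hz, hrz, hz1, hz2⟩ := hDD a ha x hx.1 y hy.1 hx.2 hy.2
    exact ⟨z, ⟨hz, hrz⟩, hz1, hz2⟩
  have hne : ∀ a ∈ A, ({c | c ∈ A ∧ r a c} : Set L).Nonempty := by
    intro a ha
    obtain ⟨b, hb, hr⟩ := hSF a ha
    exact ⟨b, hb, hr⟩
  have key : ∀ a ∈ A, ∀ b ∈ A, (diam A r a ≤ b ↔ r a b) := by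
    intro a ha b hb
    constructor
    · intro h
      obtain ⟨x, hx, y, hy, hxy⟩ := hcompact {c | c ∈ A ∧ r a c} {b}
        (fun c hc => hc.1) (hne a ha) (hdir a ha)
        (by simpa using hb) ⟨b, rfl⟩
        (by intro x hx y hy; simp_all)
        (by simpa [diam] using h)
      rcases hy with rfl
      exact hWO a ha x hx.1 y hb hx.2 hxy
    · intro h
      exact sInf_le ⟨hb, h⟩
  refine ⟨⟨fun hT a ha => ?_, fun h a ha b hb c hc hab hbc => ?_⟩,
    ⟨fun hD a ha => ?_, fun h a ha c hc hac => ?_⟩⟩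
  · -- T → diam ≤ diam2
    refine le_sInf fun x hx => ?_
    obtain ⟨b, hb, hle, rfl⟩ := hx
    have hab : r a b := (key a ha b hb).1 hle
    exact le_sInf fun c hc => sInf_le ⟨hc.1, hT a ha b hb c hc.1 hab hc.2⟩
  · -- diam ≤ diam2 → T
    have h1 : diam2 A r a ≤ diam A r b := sInf_le ⟨b, hb, sInf_le ⟨hb, hab⟩, rfl⟩
    have h2 : diam A r b ≤ c := sInf_le ⟨hc, hbc⟩
    exact (key a ha c hc).1 (((h a ha).trans h1).trans h2)
  · -- D → diam2 ≤ diam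
    refine le_sInf fun c hc => ?_
    obtain ⟨b, hb, hab, hbc⟩ := hD a ha c hc.1 hc.2
    have h1 : diam2 A r a ≤ diam A r b := sInf_le ⟨b, hb, sInf_le ⟨hb, hab⟩, rfl⟩
    exact h1.trans (sInf_le ⟨hc.1, hbc⟩)
  · -- diam2 ≤ diam → D
    set F : Set L := {x | x ∈ A ∧ ∃ b, b ∈ A ∧ r a b ∧ r b x} with hF
    have hFA : F ⊆ A := fun x hx => hx.1
    have hFne : F.Nonempty := by
      obtain ⟨b, hb, hab⟩ := hSF a ha
      obtain ⟨x, hx, hbx⟩ := hSF b hb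
      exact ⟨x, hx, b, hb, hab, hbx⟩
    have hFdir : DirectedOn (· ≥ ·) F := by
      intro x hx y hy
      obtain ⟨hxA, b₁, hb₁, hab₁, hb₁x⟩ := hx
      obtain ⟨hyA, b₂, hb₂, hab₂, hb₂y⟩ := hy
      obtain ⟨b, hb, hab, hbb₁, hbb₂⟩ := hDD a ha b₁ hb₁ b₂ hb₂ hab₁ hab₂
      have hbx : r b x := hSI b hb b₁ hb₁ x hxA hbb₁ hb₁x
      have hby : r b y := hSI b hb b₂ hb₂ y hyA hbb₂ hb₂y
      obtain ⟨z, hz, hbz, hzx, hzy⟩ := hDD b hb x hxA y hyA hbx hby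
      exact ⟨z, ⟨hz, b, hb, hab, hbz⟩, hzx, hzy⟩
    have hFle : sInf F ≤ diam2 A r a := by
      refine le_sInf fun y hy => ?_
      obtain ⟨b, hb, hle, rfl⟩ := hy
      have hab : r a b := (key a ha b hb).1 hle
      exact le_sInf fun x hx => sInf_le ⟨hx.1, b, hb, hab, hx.2⟩
    have hlec : sInf F ≤ sSup {c} := by
      rw [sSup_singleton]
      exact (hFle.trans (h a ha)).trans (sInf_le ⟨hc, hac⟩)
    obtain ⟨x, hx, y, hy, hxy⟩ := hcompact F {c} hFA hFne hFdir
      (by simpa using hc) ⟨c, rfl⟩ (by intro x hx y hy; simp_all) hlec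
    rcases hy with rfl
    obtain ⟨hxA, b, hb, hab, hbx⟩ := hx
    exact ⟨b, hb, hab, hWO b hb x hxA y hc hbx hxy⟩
end

section
/- Let L be a complete lattice, A ⊆ L a subset closed under the binary meet of L and compact in L, and ≺ a binary relation on A satisfying (SF), (DD), (SI) and (WO). Define ◇a := sInf {c ∈ A | a ≺ c}. Then the cumulative transitivity condition (CT) [for all a, b, c ∈ A, a ≺ b and (a ⊓ b) ≺ c imply a ≺ c] holds if and only if for every a ∈ A: ◇a ≤ sInf {◇d | d ∈ A, a ⊓ ◇a ≤ d}. -/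
theorem stmt_15 {L : Type*} [CompleteLattice L] (A : Set L)
    (hmeet : ∀ a ∈ A, ∀ b ∈ A, a ⊓ b ∈ A)
    (hcompact : CompactIn A) (r : L → L → Prop)
    (hSF : ∀ a ∈ A, ∃ b ∈ A, r a b)
    (hDD : ∀ a ∈ A, ∀ x₁ ∈ A, ∀ x₂ ∈ A, r a x₁ → r a x₂ →
      ∃ x ∈ A, r a x ∧ x ≤ x₁ ∧ x ≤ x₂)
    (hSI : ∀ a ∈ A, ∀ b ∈ A, ∀ x ∈ A, a ≤ b → r b x → r a x)
    (hWO : ∀ b ∈ A, ∀ x ∈ A, ∀ y ∈ A, r b x → x ≤ y → r b y) :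
    (∀ a ∈ A, ∀ b ∈ A, ∀ c ∈ A, r a b → r (a ⊓ b) c → r a c) ↔
      ∀ a ∈ A, diam A r a ≤ sInf {x | ∃ d ∈ A, a ⊓ diam A r a ≤ d ∧ x = diam A r d} := by
  have hFsub : ∀ a ∈ A, {c | c ∈ A ∧ r a c} ⊆ A := fun a _ c hc => hc.1
  have hFne : ∀ a ∈ A, ({c | c ∈ A ∧ r a c}).Nonempty := by
    intro a ha
    obtain ⟨b, hb, hrb⟩ := hSF a ha
    exact ⟨b, hb, hrb⟩
  have hFdir : ∀ a ∈ A, DirectedOn (· ≥ ·) {c | c ∈ A ∧ r a c} := by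
    intro a ha x₁ hx₁ x₂ hx₂
    obtain ⟨x, hx, hrx, h1, h2⟩ := hDD a ha x₁ hx₁.1 x₂ hx₂.1 hx₁.2 hx₂.2
    exact ⟨x, ⟨hx, hrx⟩, h1, h2⟩
  have hsingdir : ∀ c : L, DirectedOn (· ≤ ·) ({c} : Set L) := by
    intro c x hx y hy
    exact ⟨c, rfl, le_of_eq hx, le_of_eq hy⟩
  have key : ∀ a ∈ A, ∀ c ∈ A, diam A r a ≤ c → r a c := by
    intro a ha c hc h
    obtain ⟨x, hx, y, hy, hxy⟩ := hcompact {c' | c' ∈ A ∧ r a c'} {c}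
      (hFsub a ha) (hFne a ha) (hFdir a ha)
      (by simpa using hc) ⟨c, rfl⟩ (hsingdir c)
      (by simpa [diam] using h)
    exact hWO a ha x hx.1 c hc hx.2 (le_of_le_of_eq hxy hy)
  constructor
  · intro hCT a ha
    apply le_sInf
    rintro _ ⟨d, hd, hled, rfl⟩
    apply le_sInf
    rintro c ⟨hc, hrdc⟩
    -- use compactness on the image set (a ⊓ ·) '' F
    set F : Set L := {c' | c' ∈ A ∧ r a c'} with hF
    obtain ⟨b0, hb0⟩ := hFne a ha
    have hsub' : (fun x => a ⊓ x) '' F ⊆ A := by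
      rintro _ ⟨x, hx, rfl⟩
      exact hmeet a ha x hx.1
    have hne' : ((fun x => a ⊓ x) '' F).Nonempty := ⟨_, ⟨b0, hb0, rfl⟩⟩
    have hdir' : DirectedOn (· ≥ ·) ((fun x => a ⊓ x) '' F) := by
      rintro _ ⟨x₁, hx₁, rfl⟩ _ ⟨x₂, hx₂, rfl⟩
      obtain ⟨x, hx, h1, h2⟩ := hFdir a ha x₁ hx₁ x₂ hx₂
      exact ⟨a ⊓ x, ⟨x, hx, rfl⟩, inf_le_inf_left a h1, inf_le_inf_left a h2⟩
    have hinf_le : sInf ((fun x => a ⊓ x) '' F) ≤ a ⊓ diam A r a := by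
      refine le_inf ?_ ?_
      · exact le_trans (sInf_le ⟨b0, hb0, rfl⟩) inf_le_left
      · refine le_sInf fun x hx => le_trans (sInf_le ⟨x, hx, rfl⟩) inf_le_right
    obtain ⟨_, ⟨x, hx, rfl⟩, y, hy, hxy⟩ := hcompact ((fun x => a ⊓ x) '' F) {d}
      hsub' hne' hdir' (by simpa using hd) ⟨d, rfl⟩ (hsingdir d)
      (by simpa using le_trans hinf_le hled)
    have hxy' : a ⊓ x ≤ d := le_of_le_of_eq hxy hy
    have hax : a ⊓ x ∈ A := hmeet a ha x hx.1
    have hr1 : r (a ⊓ x) c := hSI (a ⊓ x) hax d hd c hc hxy' hrdc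
    have : r a c := hCT a ha x hx.1 c hc hx.2 hr1
    exact sInf_le ⟨hc, this⟩
  · intro h a ha b hb c hc hab habc
    have h1 : diam A r a ≤ b := sInf_le ⟨hb, hab⟩
    have h2 : a ⊓ diam A r a ≤ a ⊓ b := inf_le_inf_left a h1
    have h3 : diam A r a ≤ diam A r (a ⊓ b) :=
      le_trans (h a ha) (sInf_le ⟨a ⊓ b, hmeet a ha b hb, h2, rfl⟩)
    have h4 : diam A r (a ⊓ b) ≤ c := sInf_le ⟨hc, habc⟩
    exact key a ha c hc (le_trans h3 h4)
end

section
/- Let L be a complete lattice, A ⊆ L a subset compact in L, and let ≺₁ and ≺₂ be binary relations on A each satisfying (SF), (DD) and (WO). Then ≺₁ ⊆ ≺₂ (i.e., a ≺₁ b implies a ≺₂ b for all a, b ∈ A) if and only if for every a ∈ A: sInf {c ∈ A | a ≺₂ c} ≤ sInf {c ∈ A | a ≺₁ c}. -/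
theorem CompactIn.exists_le_of_sInf_le {L : Type*} [CompleteLattice L] {A F : Set L}
    (hA : CompactIn A) (hFA : F ⊆ A) (hF : F.Nonempty) (hdir : DirectedOn (· ≥ ·) F)
    {b : L} (hb : b ∈ A) (hle : sInf F ≤ b) : ∃ a ∈ F, a ≤ b := by
  obtain ⟨a, haF, b', rfl, hab⟩ := hA F {b} hFA hF hdir (Set.singleton_subset_iff.2 hb)
    (Set.singleton_nonempty b) (directedOn_singleton b) (by rwa [sSup_singleton])
  exact ⟨a, haF, hab⟩

theorem rel_iff_sInf_le {L : Type*} [CompleteLattice L] {A : Set L} (hA : CompactIn A)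
    {r : L → L → Prop} {a : L} (hSF : ∃ b ∈ A, r a b)
    (hDD : ∀ x₁ ∈ A, ∀ x₂ ∈ A, r a x₁ → r a x₂ → ∃ x ∈ A, r a x ∧ x ≤ x₁ ∧ x ≤ x₂)
    (hWO : ∀ x ∈ A, ∀ y ∈ A, r a x → x ≤ y → r a y) {b : L} (hb : b ∈ A) :
    r a b ↔ sInf {c | c ∈ A ∧ r a c} ≤ b := by
  refine ⟨fun hab => sInf_le ⟨hb, hab⟩, fun hle => ?_⟩
  have hdir : DirectedOn (· ≥ ·) {c | c ∈ A ∧ r a c} := by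
    rintro x ⟨hxA, hx⟩ y ⟨hyA, hy⟩
    obtain ⟨z, hzA, hz, hzx, hzy⟩ := hDD x hxA y hyA hx hy
    exact ⟨z, ⟨hzA, hz⟩, hzx, hzy⟩
  obtain ⟨c, ⟨hcA, hc⟩, hcb⟩ :=
    hA.exists_le_of_sInf_le (fun _ hc => hc.1) hSF hdir hb hle
  exact hWO c hcA b hb hc hcb

theorem stmt_16_general {L : Type*} [CompleteLattice L] (A : Set L)
    (hcompact : CompactIn A) (r₁ r₂ : L → L → Prop)
    (hSF₂ : ∀ a ∈ A, ∃ b ∈ A, r₂ a b)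
    (hDD₂ : ∀ a ∈ A, ∀ x₁ ∈ A, ∀ x₂ ∈ A, r₂ a x₁ → r₂ a x₂ →
      ∃ x ∈ A, r₂ a x ∧ x ≤ x₁ ∧ x ≤ x₂)
    (hWO₂ : ∀ b ∈ A, ∀ x ∈ A, ∀ y ∈ A, r₂ b x → x ≤ y → r₂ b y) :
    (∀ a ∈ A, ∀ b ∈ A, r₁ a b → r₂ a b) ↔
      ∀ a ∈ A, sInf {c | c ∈ A ∧ r₂ a c} ≤ sInf {c | c ∈ A ∧ r₁ a c} := by
  refine ⟨fun h a ha => sInf_le_sInf fun c hc => ⟨hc.1, h a ha c hc.1 hc.2⟩, ?_⟩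
  intro h a ha b hb hab
  rw [rel_iff_sInf_le hcompact (hSF₂ a ha) (hDD₂ a ha) (hWO₂ a ha) hb]
  exact (h a ha).trans (sInf_le ⟨hb, hab⟩)

theorem stmt_16 {L : Type*} [CompleteLattice L] (A : Set L)
    (hcompact : CompactIn A) (r₁ r₂ : L → L → Prop)
    (hSF₁ : ∀ a ∈ A, ∃ b ∈ A, r₁ a b)
    (hDD₁ : ∀ a ∈ A, ∀ x₁ ∈ A, ∀ x₂ ∈ A, r₁ a x₁ → r₁ a x₂ →
      ∃ x ∈ A, r₁ a x ∧ x ≤ x₁ ∧ x ≤ x₂)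
    (hWO₁ : ∀ b ∈ A, ∀ x ∈ A, ∀ y ∈ A, r₁ b x → x ≤ y → r₁ b y)
    (hSF₂ : ∀ a ∈ A, ∃ b ∈ A, r₂ a b)
    (hDD₂ : ∀ a ∈ A, ∀ x₁ ∈ A, ∀ x₂ ∈ A, r₂ a x₁ → r₂ a x₂ →
      ∃ x ∈ A, r₂ a x ∧ x ≤ x₁ ∧ x ≤ x₂)
    (hWO₂ : ∀ b ∈ A, ∀ x ∈ A, ∀ y ∈ A, r₂ b x → x ≤ y → r₂ b y) :
    (∀ a ∈ A, ∀ b ∈ A, r₁ a b → r₂ a b) ↔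
      ∀ a ∈ A, sInf {c | c ∈ A ∧ r₂ a c} ≤ sInf {c | c ∈ A ∧ r₁ a c} :=
  stmt_16_general A hcompact r₁ r₂ hSF₂ hDD₂ hWO₂
end

section
/- Let L be a frame (a complete lattice in which binary meets distribute over arbitrary suprema), and let A ⊆ L be a subset containing the bottom and top elements of L, closed under the binary meet and join of L, and compact in L. Let ≺₁ and ≺₂ be binary relations on A each satisfying (⊥), (⊤), (SI), (WO), (AND) and (OR). Then the condition (P2) [for all a, b, c ∈ A: if (a ⊓ b) ≺₂ c, then for every d ∈ A with d ≺₁ a there exists e ∈ A with b ≺₂ e and d ⊓ e ≤ c] holds if and only if for all a, b ∈ A: sSup {d ∈ A | d ≺₁ a} ⊓ sInf {e ∈ A | b ≺₂ e} ≤ sInf {c ∈ A | (a ⊓ b) ≺₂ c}. -/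
/-- A subordination relation on the subset `A` of a bounded lattice:
conditions (⊥), (⊤), (SI), (WO), (AND), (OR). -/
def IsSubordinationOn {L : Type*} [CompleteLattice L] (A : Set L)
    (r : L → L → Prop) : Prop :=
  r ⊥ ⊥ ∧ r ⊤ ⊤ ∧
  (∀ a ∈ A, ∀ b ∈ A, ∀ x ∈ A, a ≤ b → r b x → r a x) ∧
  (∀ b ∈ A, ∀ x ∈ A, ∀ y ∈ A, r b x → x ≤ y → r b y) ∧
  (∀ a ∈ A, ∀ x ∈ A, ∀ y ∈ A, r a x → r a y → r a (x ⊓ y)) ∧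
  (∀ a ∈ A, ∀ b ∈ A, ∀ x ∈ A, r a x → r b x → r (a ⊔ b) x)

theorem stmt_17 {L : Type*} [Order.Frame L] (A : Set L)
    (hbot : ⊥ ∈ A) (htop : ⊤ ∈ A)
    (hmeet : ∀ a ∈ A, ∀ b ∈ A, a ⊓ b ∈ A)
    (hjoin : ∀ a ∈ A, ∀ b ∈ A, a ⊔ b ∈ A)
    (hcompact : CompactIn A)
    (r₁ r₂ : L → L → Prop)
    (h₁ : IsSubordinationOn A r₁) (h₂ : IsSubordinationOn A r₂) :
    (∀ a ∈ A, ∀ b ∈ A, ∀ c ∈ A, r₂ (a ⊓ b) c →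
      ∀ d ∈ A, r₁ d a → ∃ e ∈ A, r₂ b e ∧ d ⊓ e ≤ c) ↔
      ∀ a ∈ A, ∀ b ∈ A,
        sSup {d | d ∈ A ∧ r₁ d a} ⊓ sInf {e | e ∈ A ∧ r₂ b e} ≤
          sInf {c | c ∈ A ∧ r₂ (a ⊓ b) c} := by
  obtain ⟨hb2, ht2, hSI2, hWO2, hAND2, hOR2⟩ := h₂
  constructor
  · intro hP2 a ha b hb
    rw [sSup_inf_eq]
    apply iSup₂_le
    intro d hd
    apply le_sInf
    intro c hc
    obtain ⟨e, he, hbe, hde⟩ := hP2 a ha b hb c hc.1 hc.2 d hd.1 hd.2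
    calc d ⊓ sInf {e | e ∈ A ∧ r₂ b e} ≤ d ⊓ e :=
          inf_le_inf_left d (sInf_le ⟨he, hbe⟩)
      _ ≤ c := hde
  · intro h a ha b hb c hc hrc d hd hrd
    set E : Set L := {e | e ∈ A ∧ r₂ b e} with hE
    have htopE : ⊤ ∈ E := ⟨htop, hSI2 b hb ⊤ htop ⊤ htop le_top ht2⟩
    set F : Set L := (fun e => d ⊓ e) '' E with hF
    have hmain : ∃ x ∈ F, ∃ y ∈ ({c} : Set L), x ≤ y := by
      apply hcompact
      · rintro x ⟨e, he, rfl⟩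
        exact hmeet d hd e he.1
      · exact ⟨d ⊓ ⊤, ⊤, htopE, rfl⟩
      · rintro x ⟨e1, he1, rfl⟩ y ⟨e2, he2, rfl⟩
        refine ⟨d ⊓ (e1 ⊓ e2), ⟨e1 ⊓ e2,
          ⟨hmeet e1 he1.1 e2 he2.1, hAND2 b hb e1 he1.1 e2 he2.1 he1.2 he2.2⟩, rfl⟩,
          inf_le_inf_left _ inf_le_left, inf_le_inf_left _ inf_le_right⟩
      · simpa using hc
      · exact ⟨c, rfl⟩
      · exact fun x hx y hy => ⟨c, rfl, le_of_eq hx, le_of_eq hy⟩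
      · rw [sSup_singleton]
        have h1 : sInf F ≤ d ⊓ sInf E := by
          refine le_inf ?_ (le_sInf fun e he => (sInf_le (Set.mem_image_of_mem _ he)).trans inf_le_right)
          have := sInf_le (show d ⊓ ⊤ ∈ F from ⟨⊤, htopE, rfl⟩)
          simpa using this
        have h2 : d ⊓ sInf E ≤ c := by
          calc d ⊓ sInf E ≤ sSup {d' | d' ∈ A ∧ r₁ d' a} ⊓ sInf E :=
                inf_le_inf_right _ (le_sSup ⟨hd, hrd⟩)
            _ ≤ sInf {c' | c' ∈ A ∧ r₂ (a ⊓ b) c'} := h a ha b hb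
            _ ≤ c := sInf_le ⟨hc, hrc⟩
        exact h1.trans h2
    obtain ⟨x, ⟨e, he, rfl⟩, y, hy, hxy⟩ := hmain
    rcases hy with rfl
    exact ⟨e, he.1, he.2, hxy⟩
end

section
/- Let L be a complete lattice and A ⊆ L a subset containing the top element of L and closed under the binary meet of L, and let ≺ be a binary relation on A. Let ≺₁ be the smallest binary relation on A that contains ≺, contains the pair (⊤, ⊤), and satisfies (SI), (WO) and (AND) (i.e., the intersection of all such relations). Define ◇a := sInf {c ∈ A | a ≺ c} and ◇₁a := sInf {c ∈ A | a ≺₁ c}. Then: (1) ◇₁ is monotone and ◇₁a ≤ ◇a for every a ∈ A; (2) for every monotone map f : A → L such that f(a) is closed relative to A and f(a) ≤ ◇a for all a ∈ A, one has f(a) ≤ ◇₁a for all a ∈ A. Hence ◇₁ is the largest monotone closed-valued map on A dominated by ◇. -/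
/-- The smallest relation containing `r` and the pair `(⊤, ⊤)` and satisfying
(SI), (WO) and (AND) relative to `A`: the intersection of all such relations. -/
def out1 {L : Type*} [CompleteLattice L] (A : Set L) (r : L → L → Prop)
    (a b : L) : Prop :=
  ∀ s : L → L → Prop,
    (∀ x y, r x y → s x y) → s ⊤ ⊤ →
    (∀ x ∈ A, ∀ y ∈ A, ∀ z ∈ A, x ≤ y → s y z → s x z) →
    (∀ x ∈ A, ∀ y ∈ A, ∀ z ∈ A, s x y → y ≤ z → s x z) →
    (∀ x ∈ A, ∀ y ∈ A, ∀ z ∈ A, s x y → s x z → s x (y ⊓ z)) →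
    s a b

theorem stmt_18 {L : Type*} [CompleteLattice L] (A : Set L)
    (htop : ⊤ ∈ A) (hmeet : ∀ a ∈ A, ∀ b ∈ A, a ⊓ b ∈ A)
    (r : L → L → Prop) :
    ((∀ a ∈ A, ∀ b ∈ A, a ≤ b →
        sInf {c | c ∈ A ∧ out1 A r a c} ≤ sInf {c | c ∈ A ∧ out1 A r b c}) ∧
      (∀ a ∈ A, sInf {c | c ∈ A ∧ out1 A r a c} ≤ sInf {c | c ∈ A ∧ r a c})) ∧
    (∀ f : L → L, (∀ a ∈ A, ∀ b ∈ A, a ≤ b → f a ≤ f b) →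
      (∀ a ∈ A, IsClosedElt A (f a)) →
      (∀ a ∈ A, f a ≤ sInf {c | c ∈ A ∧ r a c}) →
      ∀ a ∈ A, f a ≤ sInf {c | c ∈ A ∧ out1 A r a c}) := by
  refine ⟨⟨?_, ?_⟩, ?_⟩
  · intro a ha b hb hab
    refine sInf_le_sInf ?_
    rintro c ⟨hc, hout⟩
    exact ⟨hc, fun s hr ht hsi hwo hand =>
      hsi a ha b hb c hc hab (hout s hr ht hsi hwo hand)⟩
  · intro a _
    refine sInf_le_sInf ?_
    rintro c ⟨hc, hrc⟩
    exact ⟨hc, fun s hr _ _ _ _ => hr a c hrc⟩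
  · intro f hmono _ hle a ha
    refine le_sInf ?_
    rintro c ⟨hc, hout⟩
    -- instantiate out1 with s x y := r x y ∨ (x ∈ A ∧ y ∈ A ∧ f x ≤ y)
    have key : ∀ x ∈ A, ∀ y ∈ A,
        (r x y ∨ (x ∈ A ∧ y ∈ A ∧ f x ≤ y)) → f x ≤ y := by
      rintro x hx y hy (h | ⟨_, _, h⟩)
      · exact (hle x hx).trans (sInf_le ⟨hy, h⟩)
      · exact h
    have := hout (fun x y => r x y ∨ (x ∈ A ∧ y ∈ A ∧ f x ≤ y))
      (fun x y h => Or.inl h)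
      (Or.inr ⟨htop, htop, le_top⟩)
      (by
        intro x hx y hy z hz hxy h
        exact Or.inr ⟨hx, hz, (hmono x hx y hy hxy).trans (key y hy z hz h)⟩)
      (by
        intro x hx y hy z hz h hyz
        exact Or.inr ⟨hx, hz, (key x hx y hy h).trans hyz⟩)
      (by
        intro x hx y hy z hz h1 h2
        exact Or.inr ⟨hx, hmeet y hy z hz,
          le_inf (key x hx y hy h1) (key x hx z hz h2)⟩)
    exact key a ha c hc this
end
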